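/- arXiv:0910.5353 — 4 statements merged into one kernel-verified Lean document; each statement's English description precedes it below -/
import Mathlib

section
/- With B₀ the diagonal matrix having one eigenvalue ((n-2k)/(4k))·((k-n)/k)·h and n-1 eigenvalues ((n-2k)/(4k))·h, where h > 0 and 2 ≤ 2k < n, one has σ_k(B₀) = 0 and σ_j(B₀) > 0 for all 1 ≤ j ≤ k-1. -/
/-!
The multiset is `b * t ::ₘ replicate (n - 1) b` with `b = (n - 2k) h / (4k) > 0` and
`t = (k - n) / k`. Expanding along the first entry,
`σ_j = b^j (C(n-1, j) + t C(n-1, j-1))`, and `j C(n-1, j) = (n - j) C(n-1, j-1)` collapses this to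
`σ_j = b^j C(n-1, j-1) n (k - j) / (j k)`, which vanishes at `j = k` and is positive for `j < k`.
-/

namespace Multiset

variable {R : Type*}

theorem esymm_cons_succ [CommSemiring R] (a : R) (s : Multiset R) (j : ℕ) :
    (a ::ₘ s).esymm (j + 1) = s.esymm (j + 1) + a * s.esymm j := by
  simp only [esymm, powersetCard_cons, map_add, sum_add, map_map, Function.comp_def, prod_cons]
  rw [sum_map_mul_left]

theorem esymm_replicate [CommSemiring R] (m j : ℕ) (b : R) :
    (replicate m b).esymm j = m.choose j * b ^ j := by
  induction m generalizing j with
  | zero => cases j <;> simp [esymm, powersetCard_zero_right]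
  | succ m ih =>
    cases j with
    | zero => simp [esymm]
    | succ j =>
      rw [replicate_succ, esymm_cons_succ, ih, ih, Nat.choose_succ_succ]
      push_cast
      ring

theorem esymm_cons_mul_replicate_succ {K : Type*} [Field K] [CharZero K]
    (b t : K) (m i : ℕ) :
    (b * t ::ₘ replicate m b).esymm (i + 1) =
      b ^ (i + 1) * m.choose i * ((m - i) / (i + 1) + t) := by
  have hchoose : (m.choose (i + 1) : K) * (i + 1) = m.choose i * (m - i) := by
    rcases le_or_gt i m with him | hmi
    · rw [← Nat.cast_sub him]
      exact_mod_cast Nat.choose_succ_right_eq m i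
    · simp [Nat.choose_eq_zero_of_lt hmi, Nat.choose_eq_zero_of_lt (Nat.lt_succ_of_lt hmi)]
  rw [esymm_cons_succ, esymm_replicate, esymm_replicate]
  field_simp
  linear_combination b ^ (i + 1) * hchoose

end Multiset

/-- The σ_k-Schwarzschild endomorphism B₀ satisfies σ_k(B₀) = 0 and
σ_j(B₀) > 0 for 1 ≤ j ≤ k-1. -/
theorem stmt_4 (n k : ℕ) (h2 : 2 ≤ 2 * k) (hkn : 2 * k < n) (h : ℝ) (hh : 0 < h) :
    (((((n : ℝ) - 2 * k) / (4 * k)) * ((( k : ℝ) - n) / k) * h) ::ₘ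
        Multiset.replicate (n - 1) ((((n : ℝ) - 2 * k) / (4 * k)) * h)).esymm k = 0
    ∧ ∀ j : ℕ, 1 ≤ j → j ≤ k - 1 →
        0 < (((((n : ℝ) - 2 * k) / (4 * k)) * ((( k : ℝ) - n) / k) * h) ::ₘ
              Multiset.replicate (n - 1) ((((n : ℝ) - 2 * k) / (4 * k)) * h)).esymm j := by
  have hk : (0 : ℝ) < k := by exact_mod_cast (show 0 < k by omega)
  have hnk : (2 * k : ℝ) < n := by exact_mod_cast hkn
  set b : ℝ := ((n : ℝ) - 2 * k) / (4 * k) * h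
  have hb : 0 < b := mul_pos (div_pos (by linarith) (by linarith)) hh
  have hfirst : ((n : ℝ) - 2 * k) / (4 * k) * (((k : ℝ) - n) / k) * h =
      b * (((k : ℝ) - n) / k) := by
    ring
  have hσ (i : ℕ) :
      (b * (((k : ℝ) - n) / k) ::ₘ Multiset.replicate (n - 1) b).esymm (i + 1) =
      b ^ (i + 1) * (n - 1).choose i * (n * (k - (i + 1)) / ((i + 1) * k)) := by
    rw [Multiset.esymm_cons_mul_replicate_succ, Nat.cast_sub (show 1 ≤ n by omega)]
    field_simp
    ring
  rw [hfirst]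
  constructor
  · obtain ⟨i, rfl⟩ : ∃ i, k = i + 1 := ⟨k - 1, by omega⟩
    rw [hσ]
    simp
  · intro j hj1 hjk
    obtain ⟨i, rfl⟩ : ∃ i, j = i + 1 := ⟨j - 1, by omega⟩
    have hik : (i + 1 : ℝ) < k := by exact_mod_cast (show i + 1 < k by omega)
    have hchoose : (0 : ℝ) < (n - 1).choose i := by exact_mod_cast Nat.choose_pos (by omega)
    have hn : (0 : ℝ) < n := by linarith
    have hgap : (0 : ℝ) < k - (i + 1) := by linarith
    rw [hσ]
    positivity
end

section
/- Let n = 8 and consider the operator L[v] := -Δ_{T²} v - (7/24) Δ_{S⁶} v - (25/126) v acting on smooth functions v on S⁶ × T², where T² is the standard flat torus with fundamental domain of side 1 and S⁶ is the unit round sphere. If L[v] = 0 on S⁶ × T², then v ≡ 0. -/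
open Real

open RealInnerProductSpace in
/-- Non-degeneracy of the linearized σ₃-Yamabe operator on S⁶ × T²:
if L[v] = -Δ_{T²}v - (7/24)Δ_{S⁶}v - (25/126)v = 0 then v = 0.
The Laplacians are modeled by commuting symmetric operators with the spectra
of -Δ_{S⁶} (eigenvalues i(i+5)) and of -Δ_{T²} (eigenvalues 4π²i), whose joint
eigenvectors span a dense subspace. -/
theorem stmt_5 {H : Type*} [NormedAddCommGroup H] [InnerProductSpace ℝ H]
    (ΔS ΔT : H →ₗ[ℝ] H) (hSsym : ΔS.IsSymmetric) (hTsym : ΔT.IsSymmetric)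
    (hcomm : ∀ x, ΔS (ΔT x) = ΔT (ΔS x))
    (hSspec : ∀ (μ : ℝ) (e : H), e ≠ 0 → ΔS e = μ • e →
        ∃ i : ℕ, μ = -((i : ℝ) * (i + 5)))
    (hTspec : ∀ (μ : ℝ) (e : H), e ≠ 0 → ΔT e = μ • e →
        ∃ i : ℕ, μ = -(4 * π ^ 2 * i))
    (hdense : Dense (↑(Submodule.span ℝ
        {e : H | (∃ a : ℝ, ΔS e = a • e) ∧ (∃ b : ℝ, ΔT e = b • e)}) : Set H))
    (v : H)
    (hv : -(ΔT v) - (7 / 24 : ℝ) • ΔS v - (25 / 126 : ℝ) • v = 0) :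
    v = 0 := by
  have key : ∀ e ∈ {e : H | (∃ a : ℝ, ΔS e = a • e) ∧ (∃ b : ℝ, ΔT e = b • e)},
      ⟪v, e⟫ = 0 := by
    rintro e ⟨⟨a, ha⟩, ⟨b, hb⟩⟩
    by_cases he : e = 0
    · simp [he]
    obtain ⟨i, hi⟩ := hSspec a e he ha
    obtain ⟨j, hj⟩ := hTspec b e he hb
    have h0 : ⟪-(ΔT v) - (7 / 24 : ℝ) • ΔS v - (25 / 126 : ℝ) • v, e⟫ = 0 := by
      rw [hv]; simp
    have hT : ⟪ΔT v, e⟫ = b * ⟪v, e⟫ := by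
      rw [hTsym v e, hb, real_inner_smul_right]
    have hS : ⟪ΔS v, e⟫ = a * ⟪v, e⟫ := by
      rw [hSsym v e, ha, real_inner_smul_right]
    rw [inner_sub_left, inner_sub_left, inner_neg_left, real_inner_smul_left,
      real_inner_smul_left, hT, hS] at h0
    have hc : -b - 7 / 24 * a - 25 / 126 ≠ 0 := by
      subst hi hj
      have hπ : (3 : ℝ) < π := pi_gt_three
      rcases Nat.eq_zero_or_pos i with hi0 | hi1
      · rcases Nat.eq_zero_or_pos j with hj0 | hj1
        · subst hi0 hj0; norm_num
        · have h1 : (1 : ℝ) ≤ j := by exact_mod_cast hj1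
          subst hi0
          push_cast
          nlinarith
      · have h1 : (1 : ℝ) ≤ i := by exact_mod_cast hi1
        have hjn : (0 : ℝ) ≤ j := Nat.cast_nonneg j
        push_cast
        nlinarith
    have hmul : (-b - 7 / 24 * a - 25 / 126) * ⟪v, e⟫ = 0 := by ring_nf; ring_nf at h0; linarith
    rcases mul_eq_zero.mp hmul with h | h
    · exact absurd h hc
    · exact h
  have hspan : ∀ x ∈ Submodule.span ℝ
      {e : H | (∃ a : ℝ, ΔS e = a • e) ∧ (∃ b : ℝ, ΔT e = b • e)}, ⟪v, x⟫ = 0 := by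
    intro x hx
    induction hx using Submodule.span_induction with
    | mem e he => exact key e he
    | zero => simp
    | add x y _ _ hx hy => rw [inner_add_right, hx, hy]; ring
    | smul c x _ hx => rw [real_inner_smul_right, hx]; ring
  have hfun : (fun x : H => ⟪v, x⟫) = (fun _ => (0 : ℝ)) := by
    refine Continuous.ext_on hdense (innerSL ℝ v).continuous continuous_const ?_
    intro x hx
    exact hspan x hx
  have : ⟪v, v⟫ = 0 := congrFun hfun v
  exact inner_self_eq_zero.mp this
end

section
/- Let n, k be integers with 2 ≤ 2k < n and let δ ∈ (-(n-2k)/(2k), (n-2k)/(2k)). Let w : (-∞, 0] × S^{n-1} → ℝ be a C² solution of ∂²_t w + (n-k)/(k(n-1)) Δ_θ w - ((n-2k)/(2k))² w = 0 on (-∞,0) × S^{n-1}, with w(0,θ) = 0 for all θ, and |w(t,θ)| ≤ C (cosh t)^{-δ} for some C > 0. Then w ≡ 0. -/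
/-!
Pairing `w t` with an eigenvector `e` of `Δθ` (eigenvalue `μ ≤ 0`) gives a scalar function
`f t = ⟪e, w t⟫` with `f'' = m² f`, where `m² = a² - c μ ≥ a² > δ²` for the coefficients
`a = (n - 2k)/(2k)` and `c = (n - k)/(k(n - 1)) ≥ 0` of the equation. Hence
`f = A e^{m t} + B e^{-m t}` on `t < 0`; the bound `f = O(e^{-|δ| t})` as `t → -∞` forces `B = 0`
because `|δ| < m`, and `f 0 = 0` then forces `A = 0`. As the eigenvectors span a dense subspace,
`w t = 0`.
-/

open Set Real Filter Topology Asymptotics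
open scoped RealInnerProductSpace

section ScalarODE

variable {m : ℝ} {f f' : ℝ → ℝ}

lemma hasDerivAt_exp_mul_mul_sub {t : ℝ} (hf : HasDerivAt f (f' t) t)
    (hf' : HasDerivAt f' (m ^ 2 * f t) t) :
    HasDerivAt (fun s => exp (m * s) * (f' s - m * f s)) 0 t := by
  have hexp : HasDerivAt (fun s => exp (m * s)) (exp (m * t) * m) t := by
    simpa using ((hasDerivAt_id t).const_mul m).exp
  exact (hexp.mul (hf'.sub (hf.const_mul m))).congr_deriv (by simp only [Pi.sub_apply]; ring)

lemma exists_eq_mul_exp_add_mul_exp_neg (hm : m ≠ 0)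
    (hf : ∀ t < 0, HasDerivAt f (f' t) t) (hf' : ∀ t < 0, HasDerivAt f' (m ^ 2 * f t) t) :
    ∃ A B : ℝ, ∀ t < 0, f t = A * exp (m * t) + B * exp (-(m * t)) := by
  have hconst (r : ℝ) (hr : r ^ 2 = m ^ 2) :
      ∃ c, ∀ t < 0, exp (r * t) * (f' t - r * f t) = c := by
    have hderiv (t : ℝ) (ht : t < 0) := hasDerivAt_exp_mul_mul_sub (hf t ht) (hr ▸ hf' t ht)
    exact isOpen_Iio.exists_is_const_of_deriv_eq_zero isPreconnected_Iio
      (fun t ht => (hderiv t ht).differentiableAt.differentiableWithinAt)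
      (fun t ht => (hderiv t ht).deriv)
  obtain ⟨c₁, hc₁⟩ := hconst m rfl
  obtain ⟨c₂, hc₂⟩ := hconst (-m) (neg_sq m)
  refine ⟨c₂ / (2 * m), -c₁ / (2 * m), fun t ht => ?_⟩
  rw [← hc₁ t ht, ← hc₂ t ht, neg_mul, exp_neg]
  field_simp
  ring

lemma coeff_exp_neg_eq_zero_of_isBigO {A B b : ℝ} (hm : 0 < m) (hbm : b < m)
    (hO : (fun t => A * exp (m * t) + B * exp (-(m * t))) =O[atBot] fun t => exp (-b * t)) :
    B = 0 := by
  have hexp (r : ℝ) (hr : 0 < r) : Tendsto (fun t => exp (r * t)) atBot (𝓝 0) :=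
    tendsto_exp_atBot.comp (tendsto_id.const_mul_atBot hr)
  have hzero : Tendsto (fun t => exp (m * t) * (A * exp (m * t) + B * exp (-(m * t))))
      atBot (𝓝 0) := by
    refine ((isBigO_refl _ _).mul hO).trans_tendsto ?_
    convert hexp (m - b) (sub_pos.2 hbm) using 2 with t
    rw [← exp_add]
    ring_nf
  have hB : Tendsto (fun t => exp (m * t) * (A * exp (m * t) + B * exp (-(m * t))))
      atBot (𝓝 B) := by
    convert ((hexp (2 * m) (by positivity)).const_mul A).add_const B using 2 with t
    · rw [exp_neg, show 2 * m * t = m * t + m * t by ring, exp_add]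
      field_simp
    · simp
  exact tendsto_nhds_unique hB hzero

theorem eq_zero_of_hasDerivAt_of_isBigO_exp {b : ℝ} (hm : 0 < m) (hbm : b < m)
    (hf : ∀ t < 0, HasDerivAt f (f' t) t) (hf' : ∀ t < 0, HasDerivAt f' (m ^ 2 * f t) t)
    (hcont : ContinuousWithinAt f (Iic 0) 0) (h0 : f 0 = 0)
    (hO : f =O[atBot] fun t => exp (-b * t)) :
    ∀ t ≤ 0, f t = 0 := by
  obtain ⟨A, B, hAB⟩ := exists_eq_mul_exp_add_mul_exp_neg hm.ne' hf hf'
  have hB : B = 0 := coeff_exp_neg_eq_zero_of_isBigO hm hbm <|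
    hO.congr' ((eventually_lt_atBot 0).mono hAB) EventuallyEq.rfl
  have hA : A = 0 := by
    have hcont' : Continuous fun t => A * exp (m * t) := by fun_prop
    have hlim : Tendsto f (𝓝[<] 0) (𝓝 A) := by
      refine Tendsto.congr' (eventually_nhdsWithin_of_forall fun t ht => ?_)
        (by simpa using hcont'.continuousWithinAt.tendsto (x := 0) (s := Iio 0))
      simp [hAB t ht, hB]
    exact (tendsto_nhds_unique hlim (hcont.mono Iio_subset_Iic_self).tendsto).trans h0
  intro t ht
  rcases ht.lt_or_eq with ht | rfl
  · simp [hAB t ht, hA, hB]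
  · exact h0

end ScalarODE

lemma hasDerivAt_derivWithin_Iic {E : Type*} [NormedAddCommGroup E] [NormedSpace ℝ E]
    {g : ℝ → E} {n : WithTop ℕ∞} {a t : ℝ} (hg : ContDiffOn ℝ n g (Iic a)) (hn : n ≠ 0)
    (ht : t < a) : HasDerivAt g (derivWithin g (Iic a) t) t :=
  (hg.differentiableOn hn t ht.le).hasDerivWithinAt.hasDerivAt (Iic_mem_nhds ht)

lemma Real.cosh_le_exp_abs (t : ℝ) : cosh t ≤ exp |t| := by
  have h₁ := exp_le_exp.2 (le_abs_self t)
  have h₂ := exp_le_exp.2 (neg_le_abs t)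
  rw [cosh_eq]
  linarith

lemma isBigO_cosh_rpow_neg_atBot (δ : ℝ) :
    (fun t => cosh t ^ (-δ)) =O[atBot] fun t => exp (-|δ| * t) := by
  refine IsBigO.of_bound' ((eventually_le_atBot 0).mono fun t ht => ?_)
  rw [norm_of_nonneg (rpow_nonneg (cosh_pos t).le _), norm_of_nonneg (exp_pos _).le,
    neg_mul, ← mul_neg, ← abs_of_nonpos ht, mul_comm, exp_mul]
  calc cosh t ^ (-δ) ≤ cosh t ^ |δ| := rpow_le_rpow_of_exponent_le (one_le_cosh t) (neg_le_abs δ)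
    _ ≤ exp |t| ^ |δ| := rpow_le_rpow (cosh_pos t).le (cosh_le_exp_abs t) (abs_nonneg δ)

section InnerProductSpace

variable {H : Type*} [NormedAddCommGroup H] [InnerProductSpace ℝ H]

lemma eq_zero_of_forall_inner_eq_zero_of_dense_span {S : Set H}
    (hS : Dense (Submodule.span ℝ S : Set H)) {v : H} (hv : ∀ e ∈ S, ⟪e, v⟫ = 0) : v = 0 :=
  hS.eq_zero_of_inner_right ℝ fun _ hu => Submodule.mem_orthogonal_singleton_iff_inner_left.1 <|
    Submodule.span_le.2 (fun e he => Submodule.mem_orthogonal_singleton_iff_inner_left.2 (hv e he)) hu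

lemma inner_eq_zero_of_eigenvector {T : H →ₗ[ℝ] H} (hT : T.IsSymmetric) {a b c μ : ℝ} {e : H}
    (he : T e = μ • e) (hb : b ^ 2 < a ^ 2 - c * μ) {w : ℝ → H} (hw : ContDiffOn ℝ 2 w (Iic 0))
    (heq : ∀ t < 0, derivWithin (derivWithin w (Iic 0)) (Iic 0) t + c • T (w t) - a ^ 2 • w t = 0)
    (hO : w =O[atBot] fun t => exp (-b * t)) (h0 : w 0 = 0) :
    ∀ t ≤ 0, ⟪e, w t⟫ = 0 := by
  set m := √(a ^ 2 - c * μ)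
  have hm2 : m ^ 2 = a ^ 2 - c * μ := sq_sqrt (by nlinarith [sq_nonneg b])
  have hbm : |b| < m := by
    rw [← sqrt_sq_eq_abs]
    exact sqrt_lt_sqrt (sq_nonneg b) hb
  have hw' : ContDiffOn ℝ 1 (derivWithin w (Iic 0)) (Iic 0) :=
    hw.derivWithin (uniqueDiffOn_Iic 0) (by norm_num)
  refine eq_zero_of_hasDerivAt_of_isBigO_exp (f' := fun t => ⟪e, derivWithin w (Iic 0) t⟫)
    ((abs_nonneg b).trans_lt hbm) ((le_abs_self b).trans_lt hbm) (fun t ht => ?_)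
    (fun t ht => ?_) (continuousWithinAt_const.inner (hw.continuousOn 0 self_mem_Iic))
    (by simp [h0]) (((innerSL ℝ e).isBigO_comp w atBot).trans hO)
  · simpa using (hasDerivAt_const t e).inner ℝ (hasDerivAt_derivWithin_Iic hw two_ne_zero ht)
  · have hw'' : derivWithin (derivWithin w (Iic 0)) (Iic 0) t = a ^ 2 • w t - c • T (w t) := by
      rw [eq_sub_iff_add_eq, ← sub_eq_zero, ← heq t ht]
    have hTw : ⟪e, T (w t)⟫ = μ * ⟪e, w t⟫ := by
      rw [← hT, he, real_inner_smul_left]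
    refine ((hasDerivAt_const t e).inner ℝ
      (hasDerivAt_derivWithin_Iic hw' one_ne_zero ht)).congr_deriv ?_
    rw [hw'', inner_zero_left, add_zero, inner_sub_right, real_inner_smul_right,
      real_inner_smul_right, hTw, hm2]
    ring

end InnerProductSpace

theorem stmt_7_general (n k : ℕ) (h2 : 2 ≤ 2 * k) (hkn : 2 * k < n) (δ : ℝ)
    (hδ₁ : -(((n : ℝ) - 2 * k) / (2 * k)) < δ) (hδ₂ : δ < ((n : ℝ) - 2 * k) / (2 * k))
    {H : Type*} [NormedAddCommGroup H] [InnerProductSpace ℝ H]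
    (Δθ : H →ₗ[ℝ] H) (hsym : Δθ.IsSymmetric)
    (hspec : ∀ (μ : ℝ) (e : H), e ≠ 0 → Δθ e = μ • e →
        ∃ j : ℕ, μ = -((j : ℝ) * ((j : ℝ) + n - 2)))
    (hdense : Dense (↑(Submodule.span ℝ {e : H | ∃ a : ℝ, Δθ e = a • e}) : Set H))
    (w : ℝ → H) (hw : ContDiffOn ℝ 2 w (Set.Iic 0))
    (C : ℝ)
    (heq : ∀ t < 0,
      derivWithin (derivWithin w (Set.Iic 0)) (Set.Iic 0) t
        + (((n : ℝ) - k) / (k * ((n : ℝ) - 1))) • Δθ (w t)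
        - ((((n : ℝ) - 2 * k) / (2 * k)) ^ 2) • w t = 0)
    (hbd : ∀ t ≤ 0, ‖w t‖ ≤ C * (Real.cosh t) ^ (-δ))
    (hbc : w 0 = 0) :
    ∀ t ≤ 0, w t = 0 := by
  have hk : (1 : ℝ) ≤ k := by exact_mod_cast (by omega : 1 ≤ k)
  have hn : 2 * (k : ℝ) + 1 ≤ n := by exact_mod_cast hkn
  have hO : w =O[atBot] fun t => exp (-|δ| * t) :=
    (IsBigO.of_bound C <| (eventually_le_atBot 0).mono fun t ht => by
      simpa [norm_of_nonneg (rpow_nonneg (cosh_pos t).le _)] using hbd t ht).trans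
      (isBigO_cosh_rpow_neg_atBot δ)
  have horth (t : ℝ) (ht : t ≤ 0) : ∀ e ∈ {e : H | ∃ a : ℝ, Δθ e = a • e}, ⟪e, w t⟫ = 0 := by
    rintro e ⟨μ, hμ⟩
    rcases eq_or_ne e 0 with rfl | he
    · exact inner_zero_left _
    obtain ⟨j, rfl⟩ := hspec μ e he hμ
    refine inner_eq_zero_of_eigenvector hsym hμ ?_ hw heq hO hbc t ht
    have hc : 0 ≤ ((n : ℝ) - k) / (k * ((n : ℝ) - 1)) :=
      div_nonneg (by linarith) (mul_nonneg (by linarith) (by linarith))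
    have hlam : 0 ≤ (j : ℝ) * (j + n - 2) := mul_nonneg j.cast_nonneg (by linarith)
    rw [sq_abs]
    nlinarith [sq_lt_sq' hδ₁ hδ₂, mul_nonneg hc hlam]
  exact fun t ht => eq_zero_of_forall_inner_eq_zero_of_dense_span hdense (horth t ht)

/-- Uniqueness for the limit problem on the half-cylinder (-∞,0] × S^{n-1}:
a solution of ∂²_t w + (n-k)/(k(n-1)) Δ_θ w - ((n-2k)/(2k))² w = 0 with zero
boundary value at t = 0 and bound |w| ≤ C (cosh t)^{-δ} vanishes identically.
The spherical Laplacian Δ_θ is modeled by a symmetric operator with eigenvalues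
-j(j+n-2) whose eigenvectors span a dense subspace. -/
theorem stmt_7 (n k : ℕ) (h2 : 2 ≤ 2 * k) (hkn : 2 * k < n) (δ : ℝ)
    (hδ₁ : -(((n : ℝ) - 2 * k) / (2 * k)) < δ) (hδ₂ : δ < ((n : ℝ) - 2 * k) / (2 * k))
    {H : Type*} [NormedAddCommGroup H] [InnerProductSpace ℝ H]
    (Δθ : H →ₗ[ℝ] H) (hsym : Δθ.IsSymmetric)
    (hspec : ∀ (μ : ℝ) (e : H), e ≠ 0 → Δθ e = μ • e →
        ∃ j : ℕ, μ = -((j : ℝ) * ((j : ℝ) + n - 2)))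
    (hdense : Dense (↑(Submodule.span ℝ {e : H | ∃ a : ℝ, Δθ e = a • e}) : Set H))
    (w : ℝ → H) (hw : ContDiffOn ℝ 2 w (Set.Iic 0))
    (C : ℝ) (hC : 0 < C)
    (heq : ∀ t < 0,
      derivWithin (derivWithin w (Set.Iic 0)) (Set.Iic 0) t
        + (((n : ℝ) - k) / (k * ((n : ℝ) - 1))) • Δθ (w t)
        - ((((n : ℝ) - 2 * k) / (2 * k)) ^ 2) • w t = 0)
    (hbd : ∀ t ≤ 0, ‖w t‖ ≤ C * (Real.cosh t) ^ (-δ))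
    (hbc : w 0 = 0) :
    ∀ t ≤ 0, w t = 0 :=
  stmt_7_general n k h2 hkn δ hδ₁ hδ₂ Δθ hsym hspec hdense w hw C heq hbd hbc
end

section
/- Let n, k be integers with 2 ≤ 2k < n and δ ∈ (-(n-2k)/(2k), (n-2k)/(2k)). Suppose w : ℝ × S^{n-1} → ℝ is a C² solution of ∂²_t w + (n-2k+1)/(n-1) Δ_θ w - (n-2k)²/(2k) w = 0 on all of ℝ × S^{n-1} satisfying |w(t,θ)| ≤ C (cosh t)^{-δ} for some constant C > 0. Then w ≡ 0. -/
/-!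
Pair `w t` with an eigenvector `e` of `Δθ`, of eigenvalue `μ = -j(j+n-2) ≤ 0`. The scalar
function `f t = ⟪e, w t⟫` solves `f'' = ν² f` with `ν² = (n-2k)²/(2k) - (n-2k+1)/(n-1) μ > δ²`,
so `f = A e^{νt} + B e^{-νt}`, while `(cosh t)^{-δ} ≤ e^{|δ||t|}` bounds `|f|` by a multiple of
`e^{|δ||t|}`. Letting `t → ±∞` gives `A = B = 0`. Thus `w t` is orthogonal to every eigenvector,
hence to their dense span, so `w t = 0`.
-/

open Filter Real Topology

theorem eq_mul_exp_of_hasDerivAt {g : ℝ → ℝ} {c : ℝ} (hg : ∀ t, HasDerivAt g (c * g t) t)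
    (t : ℝ) : g t = g 0 * exp (c * t) := by
  have hconst : ∀ s, HasDerivAt (fun s => g s * exp (-(c * s))) 0 s := fun s => by
    refine ((hg s).mul (((hasDerivAt_id' s).const_mul c).neg.exp)).congr_deriv ?_
    ring
  have hgt := is_const_of_deriv_eq_zero (fun s => (hconst s).differentiableAt)
    (fun s => (hconst s).deriv) t 0
  simp only [mul_zero, neg_zero, exp_zero, mul_one] at hgt
  rw [← hgt, mul_assoc, ← exp_add, neg_add_cancel, exp_zero, mul_one]

theorem exists_eq_mul_exp_add_mul_exp {f f' : ℝ → ℝ} {ν : ℝ} (hν : ν ≠ 0)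
    (hf : ∀ t, HasDerivAt f (f' t) t) (hf' : ∀ t, HasDerivAt f' (ν ^ 2 * f t) t) :
    ∃ A B : ℝ, ∀ t, f t = A * exp (ν * t) + B * exp (-(ν * t)) := by
  have hplus : ∀ t, HasDerivAt (fun s => f' s + ν * f s) (ν * (f' t + ν * f t)) t := fun t => by
    refine ((hf' t).add ((hf t).const_mul ν)).congr_deriv ?_
    ring
  have hminus : ∀ t, HasDerivAt (fun s => f' s - ν * f s) (-ν * (f' t - ν * f t)) t :=
    fun t => by
      refine ((hf' t).sub ((hf t).const_mul ν)).congr_deriv ?_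
      ring
  refine ⟨(f' 0 + ν * f 0) / (2 * ν), -(f' 0 - ν * f 0) / (2 * ν), fun t => ?_⟩
  have hp := eq_mul_exp_of_hasDerivAt hplus t
  have hm := eq_mul_exp_of_hasDerivAt hminus t
  simp only [neg_mul] at hm
  field_simp
  linear_combination hp - hm

theorem eq_zero_of_abs_mul_exp_add_mul_exp_le {A B ν a K : ℝ} (hν : 0 < ν) (haν : a < ν)
    (hbd : ∀ t ≥ 0, |A * exp (ν * t) + B * exp (-(ν * t))| ≤ K * exp (a * t)) : A = 0 := by
  have hlim : Tendsto (fun t => A + B * exp (-(2 * ν) * t)) atTop (𝓝 A) := by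
    have h2ν : -(2 * ν) < 0 := by linarith
    simpa using tendsto_const_nhds.add
      ((tendsto_exp_atBot.comp (tendsto_id.const_mul_atTop_of_neg h2ν)).const_mul B)
  have hdecay : Tendsto (fun t => K * exp ((a - ν) * t)) atTop (𝓝 0) := by
    simpa using (tendsto_exp_atBot.comp
      (tendsto_id.const_mul_atTop_of_neg (sub_neg.2 haν))).const_mul K
  refine tendsto_nhds_unique hlim (squeeze_zero_norm' ?_ hdecay)
  filter_upwards [eventually_ge_atTop 0] with t ht
  calc ‖A + B * exp (-(2 * ν) * t)‖
      = |A * exp (ν * t) + B * exp (-(ν * t))| * exp (-(ν * t)) := by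
        rw [norm_eq_abs, ← abs_of_pos (exp_pos (-(ν * t))), ← abs_mul, abs_exp]
        congr 1
        rw [add_mul, mul_assoc, mul_assoc, ← exp_add, ← exp_add]
        ring_nf; simp
    _ ≤ K * exp (a * t) * exp (-(ν * t)) := by gcongr; exact hbd t ht
    _ = K * exp ((a - ν) * t) := by rw [mul_assoc, ← exp_add]; ring_nf

theorem eq_zero_of_hasDerivAt_of_abs_le_exp {f f' : ℝ → ℝ} {ν a K : ℝ} (hν : 0 < ν)
    (haν : a < ν) (hf : ∀ t, HasDerivAt f (f' t) t) (hf' : ∀ t, HasDerivAt f' (ν ^ 2 * f t) t)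
    (hbd : ∀ t, |f t| ≤ K * exp (a * |t|)) (t : ℝ) : f t = 0 := by
  obtain ⟨A, B, hAB⟩ := exists_eq_mul_exp_add_mul_exp hν.ne' hf hf'
  have hA : A = 0 := eq_zero_of_abs_mul_exp_add_mul_exp_le (B := B) (K := K) hν haν fun t ht => by
    have := hbd t
    rwa [abs_of_nonneg ht, hAB] at this
  have hB : B = 0 := eq_zero_of_abs_mul_exp_add_mul_exp_le (B := A) (K := K) hν haν fun t ht => by
    have := hbd (-t)
    rwa [abs_neg, abs_of_nonneg ht, hAB, mul_neg, neg_neg, add_comm] at this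
  simp [hAB, hA, hB]

theorem Real.cosh_rpow_neg_le_exp (δ t : ℝ) : cosh t ^ (-δ) ≤ exp (|δ| * |t|) := by
  have hcosh : cosh t ≤ exp |t| := by
    rw [← cosh_abs, cosh_eq]
    linarith [exp_le_exp.2 (neg_le_self (abs_nonneg t))]
  calc cosh t ^ (-δ) ≤ cosh t ^ |δ| := rpow_le_rpow_of_exponent_le (one_le_cosh t) (neg_le_abs δ)
    _ ≤ exp |t| ^ |δ| := rpow_le_rpow (cosh_pos t).le hcosh (abs_nonneg δ)
    _ = exp (|δ| * |t|) := by rw [← exp_mul, mul_comm]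

section InnerProductSpace

variable {H : Type*} [NormedAddCommGroup H] [InnerProductSpace ℝ H]

theorem inner_eigenvector_eq_zero_of_deriv_deriv_eq {T : H →ₗ[ℝ] H} (hT : T.IsSymmetric)
    {e : H} {μ : ℝ} (he : T e = μ • e) {w : ℝ → H} (hw : ContDiff ℝ 2 w) {a b c K : ℝ}
    (heq : ∀ t, deriv (deriv w) t + c • T (w t) - b • w t = 0) (ha : 0 ≤ a)
    (hab : a ^ 2 < b - c * μ) (hbd : ∀ t, ‖w t‖ ≤ K * exp (a * |t|)) (t : ℝ) :
    inner ℝ e (w t) = 0 := by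
  have hw' : ∀ t, HasDerivAt w (deriv w t) t := fun t =>
    (hw.differentiable (by norm_num) t).hasDerivAt
  have hw'' : ∀ t, HasDerivAt (deriv w) (deriv (deriv w) t) t := fun t =>
    ((contDiff_succ_iff_deriv (n := 1)).1 hw).2.2.differentiable one_ne_zero t |>.hasDerivAt
  have hν : 0 < √(b - c * μ) := sqrt_pos.2 (lt_of_le_of_lt (sq_nonneg a) hab)
  refine eq_zero_of_hasDerivAt_of_abs_le_exp hν ((lt_sqrt ha).2 hab) (K := ‖e‖ * K)
    (f' := fun s => inner ℝ e (deriv w s))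
    (fun s => ((hasDerivAt_const s e).inner ℝ (hw' s)).congr_deriv (by simp))
    (fun s => ?_) (fun s => ?_) t
  · have hw''_eq : deriv (deriv w) s = b • w s - c • T (w s) := by
      rw [← sub_eq_zero, ← heq s]; abel
    have hTw : inner ℝ e (T (w s)) = μ * inner ℝ e (w s) := by
      rw [← hT, he, real_inner_smul_left]
    refine ((hasDerivAt_const s e).inner ℝ (hw'' s)).congr_deriv ?_
    rw [hw''_eq, inner_sub_right, real_inner_smul_right, real_inner_smul_right, hTw,
      sq_sqrt (lt_of_le_of_lt (sq_nonneg a) hab).le]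
    simp only [inner_zero_left, add_zero]
    ring
  · calc |inner ℝ e (w s)| ≤ ‖e‖ * ‖w s‖ := abs_real_inner_le_norm e (w s)
      _ ≤ ‖e‖ * (K * exp (a * |s|)) := mul_le_mul_of_nonneg_left (hbd s) (norm_nonneg e)
      _ = ‖e‖ * K * exp (a * |s|) := by ring

end InnerProductSpace

/-- Uniqueness for the limit problem on the whole cylinder ℝ × S^{n-1}:
a global solution of ∂²_t w + (n-2k+1)/(n-1) Δ_θ w - (n-2k)²/(2k) w = 0 with
|w| ≤ C (cosh t)^{-δ} vanishes identically. Δ_θ is modeled by a symmetric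
operator with eigenvalues -j(j+n-2) whose eigenvectors span a dense subspace. -/
theorem stmt_10 (n k : ℕ) (h2 : 2 ≤ 2 * k) (hkn : 2 * k < n) (δ : ℝ)
    (hδ₁ : -(((n : ℝ) - 2 * k) / (2 * k)) < δ) (hδ₂ : δ < ((n : ℝ) - 2 * k) / (2 * k))
    {H : Type*} [NormedAddCommGroup H] [InnerProductSpace ℝ H]
    (Δθ : H →ₗ[ℝ] H) (hsym : Δθ.IsSymmetric)
    (hspec : ∀ (μ : ℝ) (e : H), e ≠ 0 → Δθ e = μ • e →
        ∃ j : ℕ, μ = -((j : ℝ) * ((j : ℝ) + n - 2)))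
    (hdense : Dense (↑(Submodule.span ℝ {e : H | ∃ a : ℝ, Δθ e = a • e}) : Set H))
    (w : ℝ → H) (hw : ContDiff ℝ 2 w)
    (C : ℝ) (hC : 0 < C)
    (heq : ∀ t : ℝ,
      deriv (deriv w) t
        + (((n : ℝ) - 2 * k + 1) / ((n : ℝ) - 1)) • Δθ (w t)
        - (((n : ℝ) - 2 * k) ^ 2 / (2 * k)) • w t = 0)
    (hbd : ∀ t : ℝ, ‖w t‖ ≤ C * (Real.cosh t) ^ (-δ)) :
    ∀ t : ℝ, w t = 0 := by
  have hk : (2 : ℝ) ≤ 2 * k := by exact_mod_cast h2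
  have hnk : (2 * k : ℝ) < n := by exact_mod_cast hkn
  have hδ : |δ| ^ 2 < ((n : ℝ) - 2 * k) ^ 2 / (2 * k) :=
    calc |δ| ^ 2 < (((n : ℝ) - 2 * k) / (2 * k)) ^ 2 :=
          pow_lt_pow_left₀ (abs_lt.2 ⟨hδ₁, hδ₂⟩) (abs_nonneg δ) two_ne_zero
      _ ≤ ((n : ℝ) - 2 * k) ^ 2 / (2 * k) := by
          rw [div_pow]
          exact div_le_div_of_nonneg_left (sq_nonneg _) (by linarith) (by nlinarith)
  have hc : 0 ≤ ((n : ℝ) - 2 * k + 1) / ((n : ℝ) - 1) := div_nonneg (by linarith) (by linarith)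
  have hbd' : ∀ t, ‖w t‖ ≤ C * exp (|δ| * |t|) := fun t =>
    (hbd t).trans (mul_le_mul_of_nonneg_left (cosh_rpow_neg_le_exp δ t) hC.le)
  intro t
  have horth : Submodule.span ℝ {e : H | ∃ a : ℝ, Δθ e = a • e} ≤
      LinearMap.ker (innerₛₗ ℝ (w t)) := by
    refine Submodule.span_le.2 fun e ⟨μ, hμ⟩ => ?_
    rcases eq_or_ne e 0 with rfl | he
    · exact zero_mem _
    obtain ⟨j, rfl⟩ := hspec μ e he hμ
    have hμ_nonpos : -((j : ℝ) * ((j : ℝ) + n - 2)) ≤ 0 :=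
      neg_nonpos.2 (mul_nonneg j.cast_nonneg (by linarith))
    rw [SetLike.mem_coe, LinearMap.mem_ker, innerₛₗ_apply_apply, real_inner_comm]
    exact inner_eigenvector_eq_zero_of_deriv_deriv_eq hsym hμ hw heq (abs_nonneg δ)
      (by linarith [mul_nonpos_of_nonneg_of_nonpos hc hμ_nonpos]) hbd' t
  exact hdense.eq_zero_of_inner_left ℝ fun v hv => horth hv
end
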